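/- Rigidity of smooth functions in L_p for 0 < p < 1: Let 0 < p < 1 and α ∈ ℕ, and let f : ℝ → ℂ be 2π-periodic such that its (α−1)-st derivative f^{(α−1)} exists and is absolutely continuous on [0, 2π] (for α = 1 this means f itself is absolutely continuous). If ω_α(f, δ)_{L_p(𝕋)} / δ^α → 0 as δ → 0⁺, then f is constant. -/

import Mathlib

open MeasureTheory ENNReal
open scoped Classical

noncomputable section

/-- Lebesgue measure restricted to the fundamental cube `[0, 2π)^d` of the torus. -/
def torusMeasure (d : ℕ) : Measure (Fin d → ℝ) :=
  volume.restrict (Set.univ.pi fun _ => Set.Ico 0 (2 * Real.pi))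

/-- `L_p(𝕋^d)` quasi-norm. -/
def LpT (d : ℕ) (p : ℝ≥0∞) (f : (Fin d → ℝ) → ℂ) : ℝ≥0∞ :=
  eLpNorm f p (torusMeasure d)

/-- Euclidean norm on `ℝ^d`. -/
def euclNorm {d : ℕ} (h : Fin d → ℝ) : ℝ :=
  Real.sqrt (∑ j, h j ^ 2)

/-- Euclidean norm of an integer vector. -/
def euclNormZ {d : ℕ} (k : Fin d → ℤ) : ℝ :=
  Real.sqrt (∑ j, ((k j : ℝ)) ^ 2)

/-- `f` is `2π`-periodic in each coordinate. -/
def PeriodicT {d : ℕ} (f : (Fin d → ℝ) → ℂ) : Prop :=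
  ∀ (x : Fin d → ℝ) (j : Fin d), f (x + (2 * Real.pi) • (Pi.single j 1 : Fin d → ℝ)) = f x

/-- Generalized binomial coefficient `binom(α, ν)`. -/
def gBinom (α : ℝ) (ν : ℕ) : ℝ :=
  (∏ j ∈ Finset.range ν, (α - (j : ℝ))) / (Nat.factorial ν : ℝ)

/-- Fractional difference `Δ_h^α f`. -/
def fracDiff {d : ℕ} (α : ℝ) (h : Fin d → ℝ) (f : (Fin d → ℝ) → ℂ) :
    (Fin d → ℝ) → ℂ :=
  fun x => ∑' ν : ℕ, ((-1 : ℂ) ^ ν * (gBinom α ν : ℂ)) * f (x + (α - (ν : ℝ)) • h)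

/-- Fractional modulus of smoothness `ω_α(f, δ)_p`. -/
def omegaMod (d : ℕ) (p : ℝ≥0∞) (α : ℝ) (f : (Fin d → ℝ) → ℂ) (δ : ℝ) : ℝ≥0∞ :=
  ⨆ h : {h : Fin d → ℝ // euclNorm h ≤ δ}, LpT d p (fracDiff α h.1 f)

def dotZ {d : ℕ} (k : Fin d → ℤ) (x : Fin d → ℝ) : ℝ := ∑ j, (k j : ℝ) * x j

/-- The character `e^{i⟨k, x⟩}`. -/
def eK {d : ℕ} (k : Fin d → ℤ) (x : Fin d → ℝ) : ℂ :=
  Complex.exp (Complex.I * (dotZ k x : ℂ))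

/-- Frequencies of trigonometric polynomials of degree at most `n`. -/
def trigBox (d n : ℕ) : Finset (Fin d → ℤ) :=
  Fintype.piFinset fun _ : Fin d => Finset.Icc (-(n : ℤ)) (n : ℤ)

/-- Trigonometric polynomial with coefficients `c` and spectrum in `S`. -/
def trigPoly {d : ℕ} (S : Finset (Fin d → ℤ)) (c : (Fin d → ℤ) → ℂ) :
    (Fin d → ℝ) → ℂ :=
  fun x => ∑ k ∈ S, c k * eK k x

/-- `(it)^α := |t|^α e^{iπα sign(t)/2}` (equal to `0` for `t = 0`, `α > 0`). -/
def iPow (α t : ℝ) : ℂ :=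
  ((|t| ^ α : ℝ) : ℂ) *
    Complex.exp (Complex.I * ((Real.pi * α * Real.sign t / 2 : ℝ) : ℂ))

/-- Fractional directional derivative `(∂/∂ξ)^α` of a trigonometric polynomial. -/
def dirDerivPoly {d : ℕ} (α : ℝ) (ξ : Fin d → ℝ) (S : Finset (Fin d → ℤ))
    (c : (Fin d → ℤ) → ℂ) : (Fin d → ℝ) → ℂ :=
  fun x => ∑ k ∈ S, iPow α (∑ j, ξ j * (k j : ℝ)) * c k * eK k x

/-- `sup_{|ξ|=1} ‖(∂/∂ξ)^α T‖_p` for a trigonometric polynomial. -/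
def supDirNorm (d : ℕ) (p : ℝ≥0∞) (α : ℝ) (S : Finset (Fin d → ℤ))
    (c : (Fin d → ℤ) → ℂ) : ℝ≥0∞ :=
  ⨆ ξ : {ξ : Fin d → ℝ // euclNorm ξ = 1}, LpT d p (dirDerivPoly α ξ.1 S c)

/-- Multi-indices `ν ∈ ℤ_{≥0}^d` with `|ν|₁ = r`. -/
def multiIdx (d r : ℕ) : Finset (Fin d → ℕ) :=
  (Fintype.piFinset fun _ : Fin d => Finset.range (r + 1)).filter
    fun ν => (∑ j, ν j) = r

/-- Partial derivative `D^ν` of a trigonometric polynomial. -/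
def partialDerivPoly {d : ℕ} (ν : Fin d → ℕ) (S : Finset (Fin d → ℤ))
    (c : (Fin d → ℤ) → ℂ) : (Fin d → ℝ) → ℂ :=
  fun x => ∑ k ∈ S, (∏ j, (Complex.I * ((k j : ℝ) : ℂ)) ^ (ν j)) * c k * eK k x

/-- Homogeneous Sobolev seminorm `‖T‖_{Ẇ_p^r}` of a trigonometric polynomial. -/
def sobolevSemiPoly (d : ℕ) (p : ℝ≥0∞) (r : ℕ) (S : Finset (Fin d → ℤ))
    (c : (Fin d → ℤ) → ℂ) : ℝ≥0∞ :=
  ∑ ν ∈ multiIdx d r, LpT d p (partialDerivPoly ν S c)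

/-- Riesz-type derivative `(-Δ)^{β/2}` of a trigonometric polynomial. -/
def rieszDeriv {d : ℕ} (β : ℝ) (S : Finset (Fin d → ℤ)) (c : (Fin d → ℤ) → ℂ) :
    (Fin d → ℝ) → ℂ :=
  fun x => ∑ k ∈ S, (if k = 0 then 0 else ((euclNormZ k ^ β : ℝ) : ℂ)) * c k * eK k x

/-- Best approximation `E_n(f)_p` by trigonometric polynomials of degree at most `n`. -/
def bestApprox (d : ℕ) (p : ℝ≥0∞) (n : ℕ) (f : (Fin d → ℝ) → ℂ) : ℝ≥0∞ :=
  ⨅ c : (Fin d → ℤ) → ℂ, LpT d p (fun x => f x - trigPoly (trigBox d n) c x)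

/-- `τ(p) = min(p, 2)` for `p < ∞` and `1` for `p = ∞`. -/
def tauOf (p : ℝ≥0∞) : ℝ := if p = ∞ then 1 else min p.toReal 2

/-- `q₁ = q` for `q < ∞` and `1` for `q = ∞`. -/
def q1Of (q : ℝ≥0∞) : ℝ := if q = ∞ then 1 else q.toReal

/-- `L_p(𝕋)` quasi-norm (one-dimensional case). -/
def LpT1 (p : ℝ≥0∞) (f : ℝ → ℂ) : ℝ≥0∞ :=
  eLpNorm f p (volume.restrict (Set.Ico 0 (2 * Real.pi)))

/-- One-dimensional trigonometric polynomial of degree at most `n`. -/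
def trigPoly1 (n : ℕ) (c : ℤ → ℂ) : ℝ → ℂ :=
  fun x => ∑ k ∈ Finset.Icc (-(n : ℤ)) (n : ℤ),
    c k * Complex.exp (Complex.I * (k : ℂ) * (x : ℂ))

/-- Weyl derivative `T^{(β)}` of a one-dimensional trigonometric polynomial. -/
def weylDeriv (β : ℝ) (n : ℕ) (c : ℤ → ℂ) : ℝ → ℂ :=
  fun x => ∑ k ∈ Finset.Icc (-(n : ℤ)) (n : ℤ),
    iPow β (k : ℝ) * c k * Complex.exp (Complex.I * (k : ℂ) * (x : ℂ))

/-- One-dimensional fractional difference. -/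
def fracDiff1 (α : ℝ) (h : ℝ) (f : ℝ → ℂ) : ℝ → ℂ :=
  fun x => ∑' ν : ℕ, ((-1 : ℂ) ^ ν * (gBinom α ν : ℂ)) * f (x + (α - (ν : ℝ)) * h)

/-- One-dimensional fractional modulus of smoothness. -/
def omegaMod1 (p : ℝ≥0∞) (α : ℝ) (f : ℝ → ℂ) (δ : ℝ) : ℝ≥0∞ :=
  ⨆ h : {h : ℝ // |h| ≤ δ}, LpT1 p (fracDiff1 α h.1 f)


/-! ### Auxiliary material for `statement19` -/

section Statement19Aux

open Filter intervalIntegral Set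

lemma gBinom_eq_choose (α ν : ℕ) (hν : ν ≤ α) : gBinom (α:ℝ) ν = (α.choose ν : ℝ) := by
  have h1 : ∏ j ∈ Finset.range ν, ((α:ℝ) - (j : ℝ)) = (α.descFactorial ν : ℝ) := by
    rw [Nat.descFactorial_eq_prod_range, Nat.cast_prod]
    refine Finset.prod_congr rfl fun j hj => ?_
    rw [Nat.cast_sub (le_trans (Nat.le_of_lt_succ (Nat.lt_succ_of_lt (Finset.mem_range.1 hj))) hν)]
  rw [gBinom, h1, Nat.descFactorial_eq_factorial_mul_choose]
  push_cast
  rw [mul_comm, mul_div_assoc, div_self (by positivity), mul_one]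

lemma gBinom_eq_zero (α ν : ℕ) (hν : α < ν) : gBinom (α:ℝ) ν = 0 := by
  rw [gBinom, Finset.prod_eq_zero (Finset.mem_range.2 hν) (by simp), zero_div]

lemma fracDiff1_eq_fwdDiff (α : ℕ) (h : ℝ) (f : ℝ → ℂ) :
    fracDiff1 (α:ℝ) h f = (fwdDiff h)^[α] f := by
  funext x
  rw [fracDiff1]
  rw [tsum_eq_sum (s := Finset.range (α+1)) (by
    intro ν hν
    have : α < ν := by simpa using hν
    simp [gBinom_eq_zero α ν this])]
  rw [fwdDiff_iter_eq_sum_shift, ← Finset.sum_range_reflect]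
  refine Finset.sum_congr rfl fun ν hν => ?_
  have hνα : ν ≤ α := Nat.lt_succ_iff.1 (Finset.mem_range.1 hν)
  have h1 : α + 1 - 1 - ν = α - ν := by omega
  rw [h1, gBinom_eq_choose α (α - ν) (Nat.sub_le _ _), Nat.choose_symm hνα]
  have e2 : (α:ℝ) - ((α - ν : ℕ):ℝ) = ν := by rw [Nat.cast_sub hνα]; ring
  rw [e2, nsmul_eq_mul, zsmul_eq_mul]
  push_cast
  ring

/-- Averaging operator: `Nh h G x = ∫_0^h G (x+t) dt`. -/
def Nh (h : ℝ) (G : ℝ → ℂ) : ℝ → ℂ := fun x => ∫ t in (0:ℝ)..h, G (x + t)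

lemma Nh_eq (h : ℝ) (G : ℝ → ℂ) (x : ℝ) : Nh h G x = ∫ t in x..(x+h), G t := by
  rw [Nh, intervalIntegral.integral_comp_add_left G]
  norm_num

lemma Nh_continuous {h : ℝ} {G : ℝ → ℂ} (hG : Continuous G) : Continuous (Nh h G) := by
  have : Nh h G = fun x => (∫ t in (0:ℝ)..(x+h), G t) - ∫ t in (0:ℝ)..x, G t := by
    funext x
    rw [Nh_eq, eq_sub_iff_add_eq, add_comm, intervalIntegral.integral_add_adjacent_intervals] <;>
      exact hG.intervalIntegrable _ _
  rw [this]
  have hc : Continuous fun y : ℝ => ∫ t in (0:ℝ)..y, G t :=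
    intervalIntegral.continuous_primitive (fun _ _ => hG.intervalIntegrable _ _) 0
  exact (hc.comp (continuous_id.add continuous_const)).sub hc

lemma Nh_iter_continuous {h : ℝ} {G : ℝ → ℂ} (hG : Continuous G) (k : ℕ) :
    Continuous ((Nh h)^[k] G) := by
  induction k with
  | zero => exact hG
  | succ k ih => rw [Function.iterate_succ_apply']; exact Nh_continuous ih

lemma fwdDiff_Nh {h : ℝ} {G : ℝ → ℂ} (hG : Continuous G) :
    fwdDiff h (Nh h G) = Nh h (fwdDiff h G) := by
  funext x
  have h1 : ∀ y : ℝ, IntervalIntegrable (fun t => G (y + t)) volume 0 h :=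
    fun y => (hG.comp (continuous_const.add continuous_id)).intervalIntegrable _ _
  simp only [fwdDiff, Nh]
  rw [← intervalIntegral.integral_sub (h1 (x+h)) (h1 x)]
  refine intervalIntegral.integral_congr fun t _ => ?_
  ring_nf

lemma fwdDiff_Nh_iter {h : ℝ} {G : ℝ → ℂ} (hG : Continuous G) (k : ℕ) :
    fwdDiff h ((Nh h)^[k] G) = (Nh h)^[k] (fwdDiff h G) := by
  induction k generalizing G with
  | zero => rfl
  | succ k ih =>
    rw [Function.iterate_succ_apply, Function.iterate_succ_apply,
      ih (Nh_continuous hG), fwdDiff_Nh hG]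

/-- If `f` is `C^m`, then `Δ_h^{m+1} f = Nh^m (Δ_h f^{(m)})`. -/
lemma fwdDiff_iter_eq_Nh_iter (h : ℝ) (m : ℕ) :
    ∀ f : ℝ → ℂ, ContDiff ℝ (m : ℕ∞) f →
      (fwdDiff h)^[m+1] f = (Nh h)^[m] (fwdDiff h (iteratedDeriv m f)) := by
  induction m with
  | zero => intro f _; simp [iteratedDeriv_zero]
  | succ m ih =>
    intro f hf
    have hf' : ContDiff ℝ (m : ℕ∞) f := hf.of_le (by exact_mod_cast Nat.cast_le.2 m.le_succ)
    have hFm : Differentiable ℝ (iteratedDeriv m f) :=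
      hf.differentiable_iteratedDeriv m (by exact_mod_cast Nat.cast_lt.2 m.lt_succ_self)
    have hFm1 : Continuous (iteratedDeriv (m+1) f) :=
      hf.continuous_iteratedDeriv (m+1) (by exact_mod_cast le_refl _)
    have key : fwdDiff h (iteratedDeriv m f) = Nh h (iteratedDeriv (m+1) f) := by
      funext y
      rw [Nh_eq, fwdDiff, iteratedDeriv_succ]
      rw [intervalIntegral.integral_deriv_eq_sub (fun t _ => hFm t)
        ((hFm1.intervalIntegrable _ _).congr (by rw [iteratedDeriv_succ]; intro _ _; rfl))]
    rw [Function.iterate_succ_apply', ih f hf', key, ← Function.iterate_succ_apply,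
      fwdDiff_Nh_iter hFm1 (m+1)]

lemma Nh_iter_const (h : ℝ) (c : ℂ) (k : ℕ) :
    (Nh h)^[k] (fun _ => c) = fun _ => h ^ k • c := by
  induction k with
  | zero => simp
  | succ k ih =>
    rw [Function.iterate_succ_apply', ih]
    funext x
    rw [Nh, intervalIntegral.integral_const, sub_zero, smul_smul, ← pow_succ']

lemma Nh_sub {h : ℝ} {G1 G2 : ℝ → ℂ} (h1 : Continuous G1) (h2 : Continuous G2) :
    Nh h (G1 - G2) = Nh h G1 - Nh h G2 := by
  funext x
  simp only [Nh, Pi.sub_apply]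
  rw [← intervalIntegral.integral_sub
    (((by fun_prop : Continuous fun t : ℝ => G1 (x + t))).intervalIntegrable _ _)
    (((by fun_prop : Continuous fun t : ℝ => G2 (x + t))).intervalIntegrable _ _)]

lemma Nh_iter_sub {h : ℝ} {G1 G2 : ℝ → ℂ} (h1 : Continuous G1) (h2 : Continuous G2) (k : ℕ) :
    (Nh h)^[k] (G1 - G2) = (Nh h)^[k] G1 - (Nh h)^[k] G2 := by
  induction k generalizing G1 G2 with
  | zero => rfl
  | succ k ih =>
    rw [Function.iterate_succ_apply, Function.iterate_succ_apply, Function.iterate_succ_apply,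
      Nh_sub h1 h2, ih (Nh_continuous h1) (Nh_continuous h2)]

lemma Nh_iter_norm_le {h : ℝ} (hh : 0 < h) {B : ℝ} (hB : 0 ≤ B) (k : ℕ) :
    ∀ (G : ℝ → ℂ) (x : ℝ), (∀ y ∈ Set.Icc x (x + k * h), ‖G y‖ ≤ B) →
      ‖(Nh h)^[k] G x‖ ≤ h ^ k * B := by
  induction k with
  | zero =>
    intro G x hG
    simpa using hG x (by simp [Set.mem_Icc])
  | succ k ih =>
    intro G x hG
    rw [Function.iterate_succ_apply']
    have : ∀ t ∈ Set.uIoc (0:ℝ) h, ‖(Nh h)^[k] G (x + t)‖ ≤ h ^ k * B := by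
      intro t ht
      rw [Set.uIoc_of_le hh.le] at ht
      refine ih G (x + t) fun y hy => hG y ?_
      constructor
      · linarith [hy.1, ht.1]
      · have := hy.2
        push_cast
        push_cast at this
        nlinarith [ht.2, hh.le]
    show ‖∫ t in (0:ℝ)..h, (Nh h)^[k] G (x + t)‖ ≤ _
    refine le_trans (intervalIntegral.norm_integral_le_of_norm_le_const this) ?_
    rw [sub_zero, abs_of_pos hh, pow_succ]
    exact le_of_eq (by ring)

lemma fwdDiff_continuous {h : ℝ} {f : ℝ → ℂ} (hf : Continuous f) :
    Continuous (fwdDiff h f) := by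
  show Continuous fun x => f (x + h) - f x
  fun_prop

lemma fwdDiff_iter_continuous {h : ℝ} {f : ℝ → ℂ} (hf : Continuous f) (k : ℕ) :
    Continuous ((fwdDiff h)^[k] f) := by
  induction k with
  | zero => exact hf
  | succ k ih => rw [Function.iterate_succ_apply']; exact fwdDiff_continuous ih

/-- The key deterministic estimate. -/
lemma fwdDiff_iter_sub_smul_norm_le (m : ℕ) (f : ℝ → ℂ) (hsm : ContDiff ℝ (m : ℕ∞) f)
    (c : ℂ) (B : ℝ) (hB : 0 ≤ B) (x h : ℝ) (hh : 0 < h)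
    (hbd : ∀ y ∈ Set.Icc x (x + m * h), ‖fwdDiff h (iteratedDeriv m f) y - h • c‖ ≤ B) :
    ‖(fwdDiff h)^[m+1] f x - h ^ (m+1) • c‖ ≤ h ^ m * B := by
  set F := iteratedDeriv m f with hF
  have hFc : Continuous F := hsm.continuous_iteratedDeriv m le_rfl
  have hD : Continuous (fwdDiff h F) := fwdDiff_continuous hFc
  have e1 : (fwdDiff h)^[m+1] f = (Nh h)^[m] (fwdDiff h F) := fwdDiff_iter_eq_Nh_iter h m f hsm
  have e2 : (h:ℝ) ^ (m+1) • c = (Nh h)^[m] (fun _ => h • c) x := by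
    rw [Nh_iter_const, smul_smul, pow_succ]
  rw [e1, e2]
  show ‖((Nh h)^[m] (fwdDiff h F) - (Nh h)^[m] fun _ => h • c) x‖ ≤ _
  rw [← Nh_iter_sub hD continuous_const]
  exact Nh_iter_norm_le hh hB m _ x (fun y hy => by simpa using hbd y hy)

lemma Function.Periodic.deriv' {f : ℝ → ℂ} {c : ℝ} (hf : Function.Periodic f c) :
    Function.Periodic (deriv f) c := by
  intro x
  calc deriv f (x + c) = deriv (fun y => f (y + c)) x := (deriv_comp_add_const f c x).symm
    _ = deriv f x := by congr 1; funext y; exact hf y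

lemma periodic_iteratedDeriv {f : ℝ → ℂ} {c : ℝ} (hf : Function.Periodic f c) (n : ℕ) :
    Function.Periodic (iteratedDeriv n f) c := by
  induction n with
  | zero => simpa [iteratedDeriv_zero]
  | succ n ih => rw [iteratedDeriv_succ]; exact ih.deriv'

lemma const_of_iteratedDeriv_const :
    ∀ (j : ℕ) (f : ℝ → ℂ), ContDiff ℝ (j : ℕ∞) f → Function.Periodic f (2 * Real.pi) →
      (∃ c, ∀ x, iteratedDeriv j f x = c) → ∃ c, ∀ x, f x = c := by
  intro j
  induction j with
  | zero => intro f _ _ hc; simpa [iteratedDeriv_zero] using hc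
  | succ j ih =>
    intro f hf hper hc
    obtain ⟨c, hc⟩ := hc
    set G := iteratedDeriv j f with hG
    have hGdiff : Differentiable ℝ G :=
      hf.differentiable_iteratedDeriv j (by exact_mod_cast Nat.cast_lt.2 j.lt_succ_self)
    have hderiv : ∀ x, deriv G x = c := by
      intro x; rw [← iteratedDeriv_succ]; exact hc x
    have hH : Differentiable ℝ (fun x : ℝ => G x - x • c) :=
      hGdiff.sub (Differentiable.smul_const differentiable_id c)
    have hH0 : ∀ x, deriv (fun x : ℝ => G x - x • c) x = 0 := by
      intro x
      have h1 : HasDerivAt (fun x : ℝ => G x - x • c) (deriv G x - (1:ℝ) • c) x :=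
        ((hGdiff x).hasDerivAt).sub ((hasDerivAt_id x).smul_const c)
      rw [h1.deriv, hderiv, one_smul, sub_self]
    have hconst := is_const_of_deriv_eq_zero hH hH0
    have hGx : ∀ x : ℝ, G x = G 0 + x • c := by
      intro x
      have := hconst x 0
      simp only [zero_smul, sub_zero] at this
      linear_combination (norm := module) this
    have hGper : Function.Periodic G (2 * Real.pi) := periodic_iteratedDeriv hper j
    have hc0 : c = 0 := by
      have h1 := hGper 0
      rw [zero_add, hGx (2 * Real.pi), hGx 0, zero_smul, add_zero] at h1
      have h2 : (2 * Real.pi) • c = 0 := by linear_combination (norm := module) h1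
      rcases smul_eq_zero.1 h2 with h | h
      · exact absurd h Real.two_pi_pos.ne'
      · exact h
    refine ih f (hf.of_le (by exact_mod_cast Nat.cast_le.2 j.le_succ)) hper ⟨G 0, fun x => ?_⟩
    show G x = G 0
    rw [hGx x, hc0, smul_zero, add_zero]

end Statement19Aux

/-- Proposition 12.1, rigidity of smooth functions in `L_p`,
`0 < p < 1`: if the `(α−1)`-st derivative of a `2π`-periodic `f` exists and is
absolutely continuous on `[0, 2π]`, and `ω_α(f, δ)_p = o(δ^α)` as `δ → 0⁺`,
then `f` is constant. -/
theorem statement19 (p : ℝ≥0∞) (hp : 0 < p) (hp1 : p < 1) (α : ℕ) (hα : 0 < α)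
    (f : ℝ → ℂ) (hper : Function.Periodic f (2 * Real.pi))
    (hsm : ContDiff ℝ (↑(α - 1) : ℕ∞) f)
    (hac : ∃ g : ℝ → ℂ, MeasureTheory.IntegrableOn g (Set.Icc 0 (2 * Real.pi)) ∧
      ∀ x ∈ Set.Icc (0 : ℝ) (2 * Real.pi),
        iteratedDeriv (α - 1) f x = iteratedDeriv (α - 1) f 0 + ∫ t in (0 : ℝ)..x, g t)
    (hdecay : Filter.Tendsto
      (fun δ : ℝ => omegaMod1 p (α : ℝ) f δ / ENNReal.ofReal (δ ^ (α : ℕ)))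
      (nhdsWithin 0 (Set.Ioi 0)) (nhds 0)) :
    ∃ c : ℂ, ∀ x, f x = c := by
  obtain ⟨m, rfl⟩ : ∃ m, α = m + 1 := ⟨α - 1, (Nat.succ_pred_eq_of_pos hα).symm⟩
  simp only [Nat.add_sub_cancel] at hsm hac
  obtain ⟨g, hgint, hgF⟩ := hac
  have hTpos : 0 < 2 * Real.pi := Real.two_pi_pos
  -- the sequence of step lengths
  have hseqpos : ∀ n : ℕ, 0 < ((n:ℝ)+1)⁻¹ := fun n => by positivity
  have hseq0 : Filter.Tendsto (fun n : ℕ => ((n:ℝ)+1)⁻¹) Filter.atTop (nhds 0) := by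
    simpa [one_div] using tendsto_one_div_add_atTop_nhds_zero_nat (𝕜 := ℝ)
  have hseqIoi : Filter.Tendsto (fun n : ℕ => ((n:ℝ)+1)⁻¹) Filter.atTop
      (nhdsWithin 0 (Set.Ioi 0)) :=
    tendsto_nhdsWithin_iff.2 ⟨hseq0, Filter.Eventually.of_forall fun n => hseqpos n⟩
  set hseq : ℕ → ℝ := fun n => ((n:ℝ)+1)⁻¹
  -- the (integrable) extension of g by zero
  set G0 : ℝ → ℂ := (Set.Icc (0:ℝ) (2*Real.pi)).indicator g with hG0def
  have hG0int : Integrable G0 volume := hgint.integrable_indicator measurableSet_Icc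
  have hgii : ∀ a b : ℝ, 0 ≤ a → b ≤ 2*Real.pi → a ≤ b → IntervalIntegrable g volume a b := by
    intro a b ha hb hab
    refine (hgint.mono_set ?_).intervalIntegrable
    rw [Set.uIcc_of_le hab]
    exact Set.Icc_subset_Icc ha hb
  have hFdiff : ∀ y z : ℝ, 0 ≤ y → y ≤ z → z ≤ 2*Real.pi →
      iteratedDeriv m f z - iteratedDeriv m f y = ∫ t in y..z, g t := by
    intro y z hy hyz hz
    rw [hgF z ⟨le_trans hy hyz, hz⟩, hgF y ⟨hy, le_trans hyz hz⟩]
    rw [add_sub_add_left_eq_sub,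
      intervalIntegral.integral_interval_sub_left (hgii 0 z le_rfl hz (le_trans hy hyz))
        (hgii 0 y le_rfl (le_trans hyz hz) hy)]
  set μ0 := volume.restrict (Set.Ioo (0:ℝ) (2*Real.pi)) with hμ0
  set fn : ℕ → ℝ → ℂ :=
    fun n x => (hseq n ^ (m+1))⁻¹ • (fwdDiff (hseq n))^[m+1] f x with hfn
  have hcontf : Continuous f := hsm.continuous
  -- pointwise a.e. convergence of normalized differences to G0
  have hptwise : ∀ᵐ x ∂μ0, Filter.Tendsto (fun n => fn n x) Filter.atTop (nhds (G0 x)) := by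
    have hleb := IsUnifLocDoublingMeasure.ae_tendsto_average_norm_sub
      (μ := (volume : Measure ℝ)) hG0int.locallyIntegrable 1
    filter_upwards [ae_restrict_of_ae hleb, ae_restrict_mem measurableSet_Ioo] with x hx hxIoo
    have hx0 : 0 < x := hxIoo.1
    have hxT : x < 2*Real.pi := hxIoo.2
    have hrad : Filter.Tendsto (fun n => ((m:ℝ)+1) * hseq n) Filter.atTop
        (nhdsWithin 0 (Set.Ioi 0)) := by
      refine tendsto_nhdsWithin_iff.2 ⟨?_, Filter.Eventually.of_forall fun n =>
        Set.mem_Ioi.2 (mul_pos (by positivity) (hseqpos n))⟩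
      simpa using hseq0.const_mul ((m:ℝ)+1)
    have havg := hx (fun _ => x) (fun n => ((m:ℝ)+1) * hseq n) hrad
      (Filter.Eventually.of_forall fun n => by
        rw [one_mul]
        exact Metric.mem_closedBall_self (mul_pos (by positivity) (hseqpos n)).le)
    have hBnn : ∀ n : ℕ,
        0 ≤ ∫ y in Metric.closedBall x (((m:ℝ)+1) * hseq n), ‖G0 y - G0 x‖ :=
      fun n => setIntegral_nonneg measurableSet_closedBall fun y _ => norm_nonneg _
    have hBeq : ∀ n : ℕ,
        (∫ y in Metric.closedBall x (((m:ℝ)+1) * hseq n), ‖G0 y - G0 x‖)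
          = 2 * (((m:ℝ)+1) * hseq n) *
            ⨍ y in Metric.closedBall x (((m:ℝ)+1) * hseq n), ‖G0 y - G0 x‖ := by
      intro n
      have hr : 0 < ((m:ℝ)+1) * hseq n := mul_pos (by positivity) (hseqpos n)
      rw [setAverage_eq, Real.volume_real_closedBall hr.le,
        smul_eq_mul]
      rw [← mul_assoc, mul_inv_cancel₀ (by linarith : (0:ℝ) < 2 * (((m:ℝ)+1) * hseq n)).ne',
        one_mul]
    have hev : ∀ᶠ n in Filter.atTop, x + ((m:ℝ)+1) * hseq n ≤ 2*Real.pi := by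
      have h1 := hseq0.eventually_lt_const
        (show (0:ℝ) < (2*Real.pi - x)/((m:ℝ)+1) from div_pos (by linarith) (by positivity))
      filter_upwards [h1] with n hn
      rw [lt_div_iff₀ (by positivity : (0:ℝ) < (m:ℝ)+1)] at hn
      nlinarith
    have hbound : ∀ᶠ n in Filter.atTop, ‖fn n x - G0 x‖ ≤
        2*((m:ℝ)+1) * ⨍ y in Metric.closedBall x (((m:ℝ)+1) * hseq n), ‖G0 y - G0 x‖ := by
      filter_upwards [hev] with n hn
      have hh : 0 < hseq n := hseqpos n
      have hbd : ∀ y ∈ Set.Icc x (x + m * hseq n),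
          ‖fwdDiff (hseq n) (iteratedDeriv m f) y - hseq n • G0 x‖ ≤
            ∫ y in Metric.closedBall x (((m:ℝ)+1) * hseq n), ‖G0 y - G0 x‖ := by
        intro y hy
        have hy0 : 0 ≤ y := le_trans hx0.le hy.1
        have hyh : y + hseq n ≤ 2*Real.pi := by
          have h2 := hy.2
          nlinarith
        have e1 : fwdDiff (hseq n) (iteratedDeriv m f) y = ∫ t in y..(y + hseq n), g t := by
          have := hFdiff y (y + hseq n) hy0 (by linarith) hyh
          simpa [fwdDiff] using this
        have e2 : hseq n • G0 x = ∫ t in y..(y + hseq n), G0 x := by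
          rw [intervalIntegral.integral_const]
          congr 1
          ring
        rw [e1, e2, ← intervalIntegral.integral_sub
          (hgii y (y + hseq n) hy0 hyh (by linarith))
          (continuous_const.intervalIntegrable _ _)]
        refine le_trans (intervalIntegral.norm_integral_le_integral_norm (by linarith)) ?_
        rw [intervalIntegral.integral_of_le (by linarith : y ≤ y + hseq n)]
        have hsub : Set.Ioc y (y + hseq n) ⊆ Metric.closedBall x (((m:ℝ)+1) * hseq n) := by
          intro t ht
          rw [Real.closedBall_eq_Icc]
          refine ⟨?_, ?_⟩
          · have h3 := ht.1
            have h4 := hy.1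
            nlinarith
          · have h3 := ht.2
            have h4 := hy.2
            nlinarith
        have hcong : (∫ t in Set.Ioc y (y + hseq n), ‖g t - G0 x‖)
            = ∫ t in Set.Ioc y (y + hseq n), ‖G0 t - G0 x‖ := by
          refine setIntegral_congr_fun measurableSet_Ioc fun t ht => ?_
          rw [hG0def, Set.indicator_of_mem (Set.mem_Icc.2 ⟨le_trans hy0 ht.1.le,
            le_trans ht.2 hyh⟩)]
        rw [hcong]
        exact setIntegral_mono_set
          ((hG0int.integrableOn.sub
            (integrableOn_const measure_closedBall_lt_top.ne)).norm)
          (Filter.Eventually.of_forall fun t => norm_nonneg _)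
          (HasSubset.Subset.eventuallyLE hsub)
      have hkey := fwdDiff_iter_sub_smul_norm_le m f hsm (G0 x) _ (hBnn n) x (hseq n) hh hbd
      have hpow : (0:ℝ) < hseq n ^ (m+1) := pow_pos hh _
      have e3 : fn n x - G0 x =
          (hseq n ^ (m+1))⁻¹ • ((fwdDiff (hseq n))^[m+1] f x - hseq n ^ (m+1) • G0 x) := by
        rw [smul_sub, smul_smul, inv_mul_cancel₀ hpow.ne', one_smul]
      rw [e3, norm_smul, Real.norm_eq_abs, abs_of_pos (inv_pos.2 hpow)]
      refine le_trans (mul_le_mul_of_nonneg_left hkey (inv_pos.2 hpow).le) (le_of_eq ?_)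
      rw [hBeq n, pow_succ]
      field_simp
    have hnorm0 : Filter.Tendsto (fun n => ‖fn n x - G0 x‖) Filter.atTop (nhds 0) := by
      refine squeeze_zero' (Filter.Eventually.of_forall fun n => norm_nonneg _) hbound ?_
      simpa using havg.const_mul (2*((m:ℝ)+1))
    exact tendsto_iff_norm_sub_tendsto_zero.2 hnorm0
  -- Fatou argument in `L_p`
  have hmeasn : ∀ n, AEStronglyMeasurable (fn n) μ0 := fun n =>
    (((fwdDiff_iter_continuous (h := hseq n) hcontf (m+1)).const_smul ((hseq n ^ (m+1))⁻¹)).aestronglyMeasurable :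
      AEStronglyMeasurable (fun x => (hseq n ^ (m+1))⁻¹ • (fwdDiff (hseq n))^[m+1] f x) μ0)
  have hfatou := Lp.eLpNorm_lim_le_liminf_eLpNorm (p := p) hmeasn G0 hptwise
  have hbn : ∀ n, eLpNorm (fn n) p μ0 ≤
      omegaMod1 p (↑(m+1)) f (hseq n) / ENNReal.ofReal (hseq n ^ (m+1)) := by
    intro n
    have h1 : fn n = ((hseq n ^ (m+1))⁻¹ : ℝ) • ((fwdDiff (hseq n))^[m+1] f) := rfl
    rw [h1, eLpNorm_const_smul]
    have h2 : eLpNorm ((fwdDiff (hseq n))^[m+1] f) p μ0 ≤ omegaMod1 p (↑(m+1)) f (hseq n) := by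
      refine le_trans (eLpNorm_mono_measure _
        (Measure.restrict_mono Set.Ioo_subset_Ico_self le_rfl)) ?_
      have h3 : eLpNorm ((fwdDiff (hseq n))^[m+1] f) p
          (volume.restrict (Set.Ico 0 (2*Real.pi)))
          = LpT1 p (fracDiff1 (↑(m+1)) (hseq n) f) := by
        rw [LpT1, fracDiff1_eq_fwdDiff]
      rw [h3]
      exact le_iSup (fun h : {h : ℝ // |h| ≤ hseq n} => LpT1 p (fracDiff1 (↑(m+1)) h.1 f))
        ⟨hseq n, le_of_eq (abs_of_pos (hseqpos n))⟩
    refine le_trans (mul_le_mul_right h2 _) (le_of_eq ?_)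
    rw [Real.enorm_eq_ofReal (by positivity),
      ENNReal.ofReal_inv_of_pos (pow_pos (hseqpos n) _), mul_comm, div_eq_mul_inv]
  have hb0 : Filter.Tendsto
      (fun n => omegaMod1 p (↑(m+1)) f (hseq n) / ENNReal.ofReal (hseq n ^ (m+1)))
      Filter.atTop (nhds 0) := hdecay.comp hseqIoi
  have h0 : eLpNorm G0 p μ0 = 0 := by
    refine le_antisymm (le_trans hfatou (le_trans
      (Filter.liminf_le_liminf (Filter.Eventually.of_forall hbn)) (le_of_eq hb0.liminf_eq)))
      zero_le
  have hG0ae : G0 =ᵐ[μ0] 0 :=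
    (eLpNorm_eq_zero_iff hG0int.aestronglyMeasurable.restrict hp.ne').1 h0
  have hgae : ∀ᵐ t ∂(volume : Measure ℝ), t ∈ Set.Ioo (0:ℝ) (2*Real.pi) → g t = 0 := by
    have h1 := (ae_restrict_iff' measurableSet_Ioo).1 hG0ae
    filter_upwards [h1] with t ht hmem
    have h2 := ht hmem
    rwa [hG0def, Set.indicator_of_mem (Set.mem_Icc_of_Ioo hmem)] at h2
  have hint0 : ∀ x ∈ Set.Icc (0:ℝ) (2*Real.pi), (∫ t in (0:ℝ)..x, g t) = 0 := by
    intro x hx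
    rw [intervalIntegral.integral_of_le hx.1]
    refine integral_eq_zero_of_ae ?_
    rw [Filter.EventuallyEq, ae_restrict_iff' measurableSet_Ioc]
    have h2 : ∀ᵐ t : ℝ ∂volume, t ∉ ({2*Real.pi} : Set ℝ) :=
      measure_eq_zero_iff_ae_notMem.1 (measure_singleton _)
    filter_upwards [hgae, h2] with t h1 h2' hmem
    have ht2 : t < 2*Real.pi :=
      lt_of_le_of_ne (le_trans hmem.2 hx.2) (by simpa using h2')
    exact h1 ⟨hmem.1, ht2⟩
  have hFconstIcc : ∀ x ∈ Set.Icc (0:ℝ) (2*Real.pi),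
      iteratedDeriv m f x = iteratedDeriv m f 0 := by
    intro x hx
    rw [hgF x hx, hint0 x hx, add_zero]
  have hFper := periodic_iteratedDeriv hper m
  have hFconst : ∀ x, iteratedDeriv m f x = iteratedDeriv m f 0 := by
    intro x
    obtain ⟨y, hy, he⟩ := hFper.exists_mem_Ico₀ Real.two_pi_pos x
    rw [he, hFconstIcc y ⟨hy.1, hy.2.le⟩]
  exact const_of_iteratedDeriv_const m f hsm hper ⟨iteratedDeriv m f 0, hFconst⟩
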